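/- Let q ≥ 2 be a real number, and let m ≥ 0, r ≥ 1 be integers. Set L = ∏_{j=0}^{r-1} (1 - q^{-(m+r-j)}) and p = L / (q^r - 1 + L). Then 0 ≤ 1 - q^r · p ≤ 2 · q^{-(m+1)}. -/

import Mathlib

/-!
Writing `Q = q ^ r`, one has `1 - Q p = (Q - 1)(1 - L) / (Q - 1 + L)`, which lies between `0` and
`1 - L`. By the Weierstrass product inequality `1 - L` is at most the sum of the `q^{-(m+r-j)}`,
a piece of the geometric series `∑_{i > m} q^{-i} = q^{-(m+1)} · q / (q - 1) ≤ 2 q^{-(m+1)}`.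
-/

open Finset

theorem Finset.one_sub_sum_le_prod_one_sub {ι R : Type*} [CommRing R] [LinearOrder R]
    [IsStrictOrderedRing R] (s : Finset ι) (f : ι → R)
    (h0 : ∀ i ∈ s, 0 ≤ f i) (h1 : ∀ i ∈ s, f i ≤ 1) :
    1 - ∑ i ∈ s, f i ≤ ∏ i ∈ s, (1 - f i) := by
  induction s using Finset.cons_induction with
  | empty => simp
  | cons a s _ ih =>
    rw [sum_cons, prod_cons]
    have ha0 := h0 a (mem_cons_self a s)
    have ha1 := h1 a (mem_cons_self a s)
    have ih := ih (fun i hi ↦ h0 i (mem_cons_of_mem hi)) (fun i hi ↦ h1 i (mem_cons_of_mem hi))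
    have hs0 : 0 ≤ ∑ i ∈ s, f i := sum_nonneg fun i hi ↦ h0 i (mem_cons_of_mem hi)
    nlinarith [mul_le_mul_of_nonneg_left ih (sub_nonneg.2 ha1)]

theorem one_sub_mul_div_sub_one_add_mem_Icc {K : Type*} [Field K] [LinearOrder K]
    [IsStrictOrderedRing K] {Q L : K} (hQ : 1 ≤ Q) (hL0 : 0 ≤ L) (hL1 : L ≤ 1) :
    1 - Q * (L / (Q - 1 + L)) ∈ Set.Icc 0 (1 - L) := by
  rcases (add_nonneg (sub_nonneg.2 hQ) hL0).eq_or_lt with hD | hD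
  · obtain rfl : L = 0 := by linarith
    simp [← hD]
  · have hform : 1 - Q * (L / (Q - 1 + L)) = (Q - 1) * (1 - L) / (Q - 1 + L) := by
      field_simp
      ring
    rw [hform]
    constructor
    · exact div_nonneg (mul_nonneg (sub_nonneg.2 hQ) (sub_nonneg.2 hL1)) hD.le
    · rw [div_le_iff₀ hD]
      nlinarith

theorem sum_range_inv_pow_add_sub_le {q : ℝ} (hq : 2 ≤ q) (m r : ℕ) :
    ∑ j ∈ range r, (q ^ (m + r - j))⁻¹ ≤ 2 * (q ^ (m + 1))⁻¹ := by
  have hx0 : 0 ≤ q⁻¹ := by positivity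
  have hx : q⁻¹ ≤ 2⁻¹ := inv_anti₀ two_pos hq
  calc ∑ j ∈ range r, (q ^ (m + r - j))⁻¹
    _ = ∑ i ∈ Ico (m + 1) (m + 1 + r), q⁻¹ ^ i := by
      rw [sum_Ico_eq_sum_range, Nat.add_sub_cancel_left, ← sum_range_reflect]
      refine sum_congr rfl fun j hj ↦ ?_
      have hj := mem_range.1 hj
      rw [inv_pow, show m + r - (r - 1 - j) = m + 1 + j by omega]
    _ ≤ q⁻¹ ^ (m + 1) / (1 - q⁻¹) := geom_sum_Ico_le_of_lt_one hx0 (by linarith)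
    _ ≤ 2 * (q ^ (m + 1))⁻¹ := by
      rw [div_le_iff₀ (by linarith), inv_pow]
      nlinarith [pow_nonneg hx0 (m + 1), inv_pow q (m + 1)]

theorem binomial_parameter_estimate_general (q : ℝ) (hq : 2 ≤ q) (m r : ℕ)
    (L : ℝ) (hL : L = ∏ j ∈ Finset.range r, (1 - (q ^ (m + r - j))⁻¹))
    (p : ℝ) (hp : p = L / (q ^ r - 1 + L)) :
    0 ≤ 1 - q ^ r * p ∧ 1 - q ^ r * p ≤ 2 * (q ^ (m + 1))⁻¹ := by
  have hq1 : 1 ≤ q := by linarith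
  have hfac0 (j : ℕ) : 0 ≤ (q ^ (m + r - j))⁻¹ := by positivity
  have hfac1 (j : ℕ) : (q ^ (m + r - j))⁻¹ ≤ 1 := inv_le_one_of_one_le₀ (one_le_pow₀ hq1)
  have hL0 : 0 ≤ L := hL ▸ prod_nonneg fun j _ ↦ sub_nonneg.2 (hfac1 j)
  have hL1 : L ≤ 1 := hL ▸ prod_le_one (fun j _ ↦ sub_nonneg.2 (hfac1 j))
    fun j _ ↦ sub_le_self _ (hfac0 j)
  have hWeierstrass := one_sub_sum_le_prod_one_sub (range r) (fun j ↦ (q ^ (m + r - j))⁻¹)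
    (fun j _ ↦ hfac0 j) (fun j _ ↦ hfac1 j)
  obtain ⟨hlow, hhigh⟩ := one_sub_mul_div_sub_one_add_mem_Icc (one_le_pow₀ hq1 : 1 ≤ q ^ r) hL0 hL1
  rw [← hp] at hlow hhigh
  refine ⟨hlow, ?_⟩
  linarith [sum_range_inv_pow_add_sub_le hq m r]

/-- For `q ≥ 2`, `L = ∏_{j=0}^{r-1} (1 - q^{-(m+r-j)})` and
`p = L / (q^r - 1 + L)` (the binomial parameter for complete intersections),
one has `0 ≤ 1 - q^r · p ≤ 2 · q^{-(m+1)}`. -/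
theorem binomial_parameter_estimate (q : ℝ) (hq : 2 ≤ q) (m r : ℕ) (hr : 1 ≤ r)
    (L : ℝ) (hL : L = ∏ j ∈ Finset.range r, (1 - (q ^ (m + r - j))⁻¹))
    (p : ℝ) (hp : p = L / (q ^ r - 1 + L)) :
    0 ≤ 1 - q ^ r * p ∧ 1 - q ^ r * p ≤ 2 * (q ^ (m + 1))⁻¹ :=
  binomial_parameter_estimate_general q hq m r L hL p hp
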